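/- arXiv:0709.1767 — 4 statements merged into one kernel-verified Lean document; each statement's English description precedes it below -/
import Mathlib

section
/- Let F be a field, let q ∈ F, let N ≥ 1, and let x_1, …, x_N ∈ F be pairwise distinct elements with x_a ≠ 1 for every a. Then ∑_{a=1}^{N} ( (1 − q²)/(x_a − 1) · ∏_{b ≠ a} (x_b − q²·x_a)/(x_b − x_a) ) = ∏_{a=1}^{N} (x_a − q²)/(x_a − 1) − 1. -/
/-!
The summands are minus the residues at `z = x_a` of the rational function
`R(z) = ∏_b (x_b - q² z) / (x_b - z) / (z (z - 1))`, whose residues at `1` and `0` are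
`∏_a (x_a - q²) / (x_a - 1)` and `-1`; as `R(z) = O(z⁻²)` at infinity, all residues sum to zero.
Algebraically this is Lagrange interpolation: a polynomial `P` of degree `N` satisfies
`∑_a P(a) / ∏_{b ≠ a} (b - a) = 0` over any `N + 2` distinct nodes, here `{0, 1, x_1, …, x_N}`
with `P(z) = ∏_b (x_b - q² z)`. If some `x_c = 0`, its term is `q² - 1` and in every other
term the factor for `b = c` equals `q²`, which reduces this case to the one without `x_c`.
-/

open Polynomial Finset

theorem Lagrange.sum_eval_div_prod_sub_eq_zero {F ι : Type*} [Field F] [DecidableEq ι]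
    {s : Finset ι} {v : ι → F} (hvs : Set.InjOn v s) {P : F[X]} (hP : P.natDegree + 1 < #s) :
    ∑ i ∈ s, P.eval (v i) / ∏ j ∈ s.erase i, (v j - v i) = 0 := by
  have hcoeff :=
    Lagrange.coeff_eq_sum hvs (P.degree_le_natDegree.trans_lt (by exact_mod_cast by omega))
  rw [coeff_eq_zero_of_natDegree_lt (by omega)] at hcoeff
  have hsign : ∀ i ∈ s,
      ∏ j ∈ s.erase i, (v j - v i) = (-1) ^ (#s - 1) * ∏ j ∈ s.erase i, (v i - v j) := by
    intro i hi
    rw [← card_erase_of_mem hi, ← prod_neg]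
    simp only [neg_sub]
  rw [sum_congr rfl fun i hi => by rw [hsign i hi, div_mul_eq_div_div_swap, div_eq_mul_inv],
    ← sum_mul, ← hcoeff, zero_mul]

theorem sum_residues_eq_of_zero_notMem {F : Type*} [Field F] [DecidableEq F] (q : F)
    {t : Finset F} (h0 : 0 ∉ t) (h1 : 1 ∉ t) :
    ∑ a ∈ t, (1 - q ^ 2) / (a - 1) * ∏ b ∈ t.erase a, (b - q ^ 2 * a) / (b - a)
      = (∏ a ∈ t, (a - q ^ 2) / (a - 1)) - 1 := by
  set P : F[X] := ∏ b ∈ t, (C b - C (q ^ 2) * X)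
  have hP : ∀ z, P.eval z = ∏ b ∈ t, (b - q ^ 2 * z) := by simp [P, eval_prod]
  have hdeg : P.natDegree ≤ #t := by
    refine (natDegree_prod_le _ _).trans
      ((sum_le_card_nsmul _ _ 1 fun b _ => ?_).trans_eq (by rw [smul_eq_mul, mul_one]))
    rw [sub_eq_add_neg, ← neg_mul, ← C_neg, add_comm]
    exact natDegree_linear_le
  have h01 : (0 : F) ∉ insert 1 t := by simp [h0]
  have hsum := Lagrange.sum_eval_div_prod_sub_eq_zero (s := insert 0 (insert 1 t)) (v := id)
    (Set.injOn_id _) (P := P) (by rw [card_insert_of_notMem h01, card_insert_of_notMem h1]; omega)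
  simp only [id] at hsum
  rw [sum_insert h01, sum_insert h1, erase_insert h01, erase_insert_of_ne zero_ne_one,
    erase_insert h1, prod_insert h1, prod_insert h0] at hsum
  have hterm0 : P.eval 0 / ((1 - 0) * ∏ b ∈ t, (b - 0)) = 1 := by
    have hprod : ∏ b ∈ t, b ≠ 0 := prod_ne_zero_iff.mpr fun b hb hb0 => h0 (hb0 ▸ hb)
    simp only [hP, mul_zero, sub_zero, one_mul, div_self hprod]
  have hterm1 :
      P.eval 1 / ((0 - 1) * ∏ b ∈ t, (b - 1)) = -∏ a ∈ t, (a - q ^ 2) / (a - 1) := by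
    simp only [hP, mul_one, prod_div_distrib]
    ring
  have hterm : ∀ a ∈ t, P.eval a / ∏ b ∈ (insert 0 (insert 1 t)).erase a, (b - a)
      = (1 - q ^ 2) / (a - 1) * ∏ b ∈ t.erase a, (b - q ^ 2 * a) / (b - a) := by
    intro a ha
    have ha0 : a ≠ 0 := fun h => h0 (h ▸ ha)
    have ha1 : a ≠ 1 := fun h => h1 (h ▸ ha)
    have h1a : (1 : F) ∉ t.erase a := fun h => h1 (mem_of_mem_erase h)
    have h0a : (0 : F) ∉ insert 1 (t.erase a) := by simp [h0]
    rw [erase_insert_of_ne ha0.symm, erase_insert_of_ne ha1.symm, prod_insert h0a,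
      prod_insert h1a, hP, ← mul_prod_erase t _ ha, prod_div_distrib, ← mul_assoc,
      mul_div_mul_comm]
    congr 1
    field_simp [sub_ne_zero.mpr ha1]
    ring
  rw [hterm0, hterm1, sum_congr rfl hterm] at hsum
  linear_combination hsum

theorem sum_residues_eq {F : Type*} [Field F] [DecidableEq F] (q : F) {t : Finset F}
    (h1 : 1 ∉ t) :
    ∑ a ∈ t, (1 - q ^ 2) / (a - 1) * ∏ b ∈ t.erase a, (b - q ^ 2 * a) / (b - a)
      = (∏ a ∈ t, (a - q ^ 2) / (a - 1)) - 1 := by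
  by_cases h0 : (0 : F) ∈ t
  swap
  · exact sum_residues_eq_of_zero_notMem q h0 h1
  obtain ⟨u, h0u, rfl⟩ : ∃ u, 0 ∉ u ∧ t = insert 0 u :=
    ⟨t.erase 0, notMem_erase 0 t, (insert_erase h0).symm⟩
  have hu := sum_residues_eq_of_zero_notMem q h0u fun h => h1 (mem_insert_of_mem h)
  have hterm0 : ∏ b ∈ u, (b - q ^ 2 * 0) / (b - 0) = 1 :=
    prod_eq_one fun b hb => by
      rw [mul_zero, sub_zero, div_self (ne_of_mem_of_not_mem hb h0u)]
  have hterm : ∀ a ∈ u,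
      (1 - q ^ 2) / (a - 1) * ∏ b ∈ (insert 0 u).erase a, (b - q ^ 2 * a) / (b - a)
        = q ^ 2 * ((1 - q ^ 2) / (a - 1) * ∏ b ∈ u.erase a, (b - q ^ 2 * a) / (b - a)) := by
    intro a ha
    have ha0 : a ≠ 0 := ne_of_mem_of_not_mem ha h0u
    rw [erase_insert_of_ne ha0.symm, prod_insert fun h => h0u (mem_of_mem_erase h),
      show (0 - q ^ 2 * a) / (0 - a) = q ^ 2 by field_simp; ring]
    ring
  rw [sum_insert h0u, prod_insert h0u, erase_insert h0u, hterm0, sum_congr rfl hterm,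
    ← mul_sum, hu]
  ring

theorem residue_identity_general {F : Type*} [Field F] (q : F) (N : ℕ)
    (x : Fin N → F) (hdist : Function.Injective x) (hx1 : ∀ a, x a ≠ 1) :
    ∑ a : Fin N, ((1 - q ^ 2) / (x a - 1) *
        ∏ b ∈ Finset.univ.erase a, (x b - q ^ 2 * x a) / (x b - x a))
      = (∏ a : Fin N, (x a - q ^ 2) / (x a - 1)) - 1 := by
  classical
  have h1 : (1 : F) ∉ univ.image x := by simpa [eq_comm] using hx1
  have key := sum_residues_eq q h1
  rw [sum_image hdist.injOn, prod_image hdist.injOn] at key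
  simpa only [← image_erase hdist, prod_image hdist.injOn] using key

/-- Let `F` be a field, `q ∈ F`, `N ≥ 1`, and let `x_1, …, x_N ∈ F` be pairwise distinct
elements with `x_a ≠ 1` for every `a`.  Then
`∑_{a=1}^{N} ((1 − q²)/(x_a − 1) · ∏_{b ≠ a} (x_b − q²·x_a)/(x_b − x_a))
  = ∏_{a=1}^{N} (x_a − q²)/(x_a − 1) − 1`. -/
theorem residue_identity {F : Type*} [Field F] (q : F) (N : ℕ) (hN : 1 ≤ N)
    (x : Fin N → F) (hdist : Function.Injective x) (hx1 : ∀ a, x a ≠ 1) :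
    ∑ a : Fin N, ((1 - q ^ 2) / (x a - 1) *
        ∏ b ∈ Finset.univ.erase a, (x b - q ^ 2 * x a) / (x b - x a))
      = (∏ a : Fin N, (x a - q ^ 2) / (x a - 1)) - 1 :=
  residue_identity_general q N x hdist hx1
end

section
/- Let k = (k_1, k_2, …) be a Maya diagram with charge c and let a ≥ 1 be an index with k_a + 1 ∉ k. Then k_a + a − c ≥ 0, and the node (a−1, k_a + a − c) is an addable node of the Young diagram λ(k), and its content equals c − k_a − 1. -/
noncomputable section

/-- A Young diagram, as a set of nodes: a finite lower set in `ℕ × ℕ`. -/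
def SIsYoung (S : Set (ℕ × ℕ)) : Prop :=
  S.Finite ∧ ∀ p ∈ S, ∀ x y : ℕ, x ≤ p.1 → y ≤ p.2 → (x, y) ∈ S

/-- The content `x - y` of a node `(x,y)`. -/
def content (p : ℕ × ℕ) : ℤ := (p.1 : ℤ) - (p.2 : ℤ)

/-- `p` is an addable node of `S`. -/
def SAddable (S : Set (ℕ × ℕ)) (p : ℕ × ℕ) : Prop :=
  p ∉ S ∧ SIsYoung (insert p S)

/-- `p` is a removable node of `S`. -/
def SRemovable (S : Set (ℕ × ℕ)) (p : ℕ × ℕ) : Prop :=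
  p ∈ S ∧ SIsYoung (S \ {p})

/-- `k` (with `k a` meaning `k_a`, for `a ≥ 1`) is a Maya diagram with charge `c`:
a strictly decreasing sequence of integers with `k_a = c - a` for large `a`. -/
def IsMaya (c : ℤ) (k : ℕ → ℤ) : Prop :=
  (∀ a : ℕ, 1 ≤ a → k (a + 1) < k a) ∧ ∃ M : ℕ, ∀ a : ℕ, M ≤ a → k a = c - a

/-- `v` belongs to the Maya diagram `k`, viewed as the subset `{k_1, k_2, …} ⊆ ℤ`. -/
def memMaya (k : ℕ → ℤ) (v : ℤ) : Prop := ∃ a : ℕ, 1 ≤ a ∧ k a = v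

/-- The Young diagram `λ(k) = {(a-1, b-1) : a ≥ 1, 1 ≤ b ≤ k_a + a - c}`
associated to a Maya diagram with charge `c`. -/
def mayaSet (c : ℤ) (k : ℕ → ℤ) : Set (ℕ × ℕ) :=
  {p | (p.2 : ℤ) + 1 ≤ k (p.1 + 1) + (p.1 + 1) - c}

/-!
Row `a` of `λ(k)` has length `k_a + a - c`; these lengths decrease weakly and reach `0`,
so the node ending row `a` is addable as soon as row `a - 1` is strictly longer than row `a`,
that is `k_{a-1} ≥ k_a + 2`, which is exactly what `k_a + 1 ∉ k` says.
-/

theorem sAddable_of_pred_mem {S : Set (ℕ × ℕ)} (hS : SIsYoung S) {p : ℕ × ℕ} (hp : p ∉ S)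
    (h₁ : 0 < p.1 → (p.1 - 1, p.2) ∈ S) (h₂ : 0 < p.2 → (p.1, p.2 - 1) ∈ S) :
    SAddable S p := by
  refine ⟨hp, hS.1.insert p, ?_⟩
  rintro q (rfl | hq) x y hx hy
  · by_cases hxy : x = q.1 ∧ y = q.2
    · exact Or.inl (Prod.ext hxy.1 hxy.2)
    refine Or.inr ?_
    rcases Nat.lt_or_ge x q.1 with hxq | hxq
    · exact hS.2 _ (h₁ (by omega)) x y (by dsimp; omega) hy
    · exact hS.2 _ (h₂ (by omega)) x y hx (by dsimp; omega)
  · exact Or.inr (hS.2 q hq x y hx hy)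

namespace IsMaya

variable {c : ℤ} {k : ℕ → ℤ}

theorem antitone_add (hk : IsMaya c k) : Antitone fun n : ℕ => k (n + 1) + (n + 1 : ℤ) :=
  antitone_nat_of_succ_le fun n => by
    have := hk.1 (n + 1) (by omega)
    push_cast
    omega

theorem le_add (hk : IsMaya c k) (n : ℕ) : c ≤ k (n + 1) + (n + 1 : ℤ) := by
  obtain ⟨M, hM⟩ := hk.2
  have hc : k (max M n + 1) + (max M n + 1 : ℕ) = c := by
    have := hM (max M n + 1) (by omega)
    omega
  have := hk.antitone_add (le_max_right M n)
  push_cast at hc this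
  omega

theorem add_two_le_of_not_memMaya (hk : IsMaya c k) {n : ℕ} (hn : 1 ≤ n)
    (h : ¬ memMaya k (k (n + 1) + 1)) : k (n + 1) + 2 ≤ k n := by
  have hlt := hk.1 n hn
  have hne : k n ≠ k (n + 1) + 1 := fun he => h ⟨n, hn, he⟩
  omega

theorem mayaSet_finite (hk : IsMaya c k) : (mayaSet c k).Finite := by
  obtain ⟨M, hM⟩ := hk.2
  refine ((Set.finite_Iio M).prod (Set.finite_Iio (k 1 + 1 - c).toNat)).subset ?_
  rintro ⟨x, y⟩ hxy
  simp only [mayaSet, Set.mem_ofPred_eq] at hxy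
  have hx := hM (x + 1)
  have hy := hk.antitone_add (Nat.zero_le x)
  push_cast at hx hy
  simp only [Set.mem_prod, Set.mem_Iio]
  omega

theorem isYoung_mayaSet (hk : IsMaya c k) : SIsYoung (mayaSet c k) := by
  refine ⟨hk.mayaSet_finite, ?_⟩
  rintro ⟨px, py⟩ hp x y hx hy
  have := hk.antitone_add hx
  simp only [mayaSet, Set.mem_ofPred_eq] at hp this ⊢
  omega

end IsMaya

theorem stmt5 (c : ℤ) (k : ℕ → ℤ) (hk : IsMaya c k) (a : ℕ) (ha : 1 ≤ a)
    (h : ¬ memMaya k (k a + 1)) :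
    0 ≤ k a + a - c ∧
    SAddable (mayaSet c k) (a - 1, (k a + a - c).toNat) ∧
    content (a - 1, (k a + a - c).toNat) = c - k a - 1 := by
  obtain ⟨n, rfl⟩ : ∃ n, a = n + 1 := ⟨a - 1, by omega⟩
  have hrow : 0 ≤ k (n + 1) + (n + 1 : ℕ) - c := by
    have := hk.le_add n
    push_cast
    omega
  have ht := Int.toNat_of_nonneg hrow
  simp only [Nat.add_sub_cancel]
  refine ⟨hrow, sAddable_of_pred_mem hk.isYoung_mayaSet ?_ ?_ ?_, ?_⟩
  · simp only [mayaSet, Set.mem_ofPred_eq, ht]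
    push_cast
    omega
  · intro hn
    obtain ⟨m, rfl⟩ : ∃ m, n = m + 1 := ⟨n - 1, by omega⟩
    have := hk.add_two_le_of_not_memMaya (n := m + 1) (by omega) h
    simp only [mayaSet, Set.mem_ofPred_eq, Nat.add_sub_cancel, ht]
    push_cast at this ⊢
    omega
  · intro _
    simp only [mayaSet, Set.mem_ofPred_eq]
    omega
  · simp only [content, ht]
    push_cast
    ring

end
end

section
/- Let k be a Maya diagram with charge c. Then the set H = {(u,v) ∈ ℤ × ℤ : u ∈ k, v ∉ k, u > v} is finite, and there is a bijection between H and the set of hooks of the Young diagram λ(k) under which the pair (u,v) corresponds to a hook of hook length u − v. -/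
noncomputable section

/-- The hook length `-x_h + y_h + x_t - y_t` of a pair of nodes. -/
def hookLen (hk : (ℕ × ℕ) × (ℕ × ℕ)) : ℤ :=
  -(hk.1.1 : ℤ) + hk.1.2 + hk.2.1 - hk.2.2

/-- `hk = ((x_h,y_h),(x_t,y_t))` is a hook of `S`. -/
def SIsHook (S : Set (ℕ × ℕ)) (hk : (ℕ × ℕ) × (ℕ × ℕ)) : Prop :=
  (hk.1.1, hk.1.2 - 1) ∈ S ∧ hk.1 ∉ S ∧ hk.2 ∈ S ∧ (hk.2.1 + 1, hk.2.2) ∉ S ∧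
    0 < hookLen hk

/-!
Reading the Maya diagram `k` as the set of beads `{k 1, k 2, …}`, row `x` of `λ(k)` has length
`k (x + 1) + (x + 1) - c`. A hook with head `(x_h, y_h)` and tail `(x_t, y_t)` is sent to the bead
`u = k (x_h + 1)` ending row `x_h` and to `v = y_t - x_t + c - 1`; the tail conditions say exactly
that `k (x_t + 2) < v < k (x_t + 1)`, so `v` is a gap, and the hook length becomes `u - v`.
Conversely a gap `v` lies between two consecutive beads, which recovers `x_t`, and `u` recovers
`x_h`. A gap below a bead `k (x + 1)` forces row `x` to be nonempty, since once a row is empty the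
beads from there on are consecutive integers.
-/

namespace IsMaya

open Set

variable {c : ℤ} {k : ℕ → ℤ}

def rowLen (c : ℤ) (k : ℕ → ℤ) (x : ℕ) : ℤ := k (x + 1) + (x + 1) - c

def beadGapPairs (k : ℕ → ℤ) : Set (ℤ × ℤ) :=
  {uv | memMaya k uv.1 ∧ ¬ memMaya k uv.2 ∧ uv.2 < uv.1}

def pairOfHook (c : ℤ) (k : ℕ → ℤ) (η : (ℕ × ℕ) × (ℕ × ℕ)) : ℤ × ℤ :=
  (k (η.1.1 + 1), η.2.2 - η.2.1 + c - 1)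

lemma memMaya_iff {v : ℤ} : memMaya k v ↔ ∃ x, k (x + 1) = v :=
  ⟨fun ⟨a, ha, hv⟩ => ⟨a - 1, by rwa [Nat.sub_add_cancel ha]⟩,
    fun ⟨x, hv⟩ => ⟨x + 1, by omega, hv⟩⟩

lemma mem_mayaSet {x y : ℕ} : (x, y) ∈ mayaSet c k ↔ (y : ℤ) < rowLen c k x := by
  simp only [mayaSet, rowLen, Set.mem_ofPred_eq]
  omega

lemma rowLen_add_one (x : ℕ) : rowLen c k (x + 1) = k (x + 2) + (x + 2) - c := by
  simp only [rowLen]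
  push_cast
  ring

lemma strictAnti (hk : IsMaya c k) : StrictAnti fun x => k (x + 1) :=
  strictAnti_nat_of_succ_lt fun x => hk.1 (x + 1) (by omega)

lemma rowLen_antitone (hk : IsMaya c k) : Antitone (rowLen c k) :=
  antitone_nat_of_succ_le fun x => by
    have := hk.1 (x + 1) (by omega)
    simp only [rowLen] at this ⊢
    push_cast
    omega

lemma exists_rowLen_eq_zero (hk : IsMaya c k) : ∃ M, ∀ x, M ≤ x → rowLen c k x = 0 := by
  obtain ⟨M, hM⟩ := hk.2
  refine ⟨M, fun x hx => ?_⟩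
  simp only [rowLen, hM (x + 1) (by omega)]
  push_cast
  ring

lemma rowLen_nonneg (hk : IsMaya c k) (x : ℕ) : 0 ≤ rowLen c k x := by
  obtain ⟨M, hM⟩ := hk.exists_rowLen_eq_zero
  exact (hM (max x M) (le_max_right x M)).symm.le.trans (hk.rowLen_antitone (le_max_left x M))

lemma memMaya_of_rowLen_eq_zero (hk : IsMaya c k) {x : ℕ} (hx : rowLen c k x = 0) {v : ℤ}
    (hv : v ≤ k (x + 1)) : memMaya k v := by
  set n := (k (x + 1) - v).toNat
  have hzero : rowLen c k (x + n) = 0 :=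
    le_antisymm (hx ▸ hk.rowLen_antitone (Nat.le_add_right x n)) (hk.rowLen_nonneg _)
  refine memMaya_iff.2 ⟨x + n, ?_⟩
  simp only [rowLen] at hx hzero
  push_cast at hzero
  omega

lemma exists_lt_of_not_memMaya (hk : IsMaya c k) : ∃ N, ∀ v, ¬ memMaya k v → N < v := by
  obtain ⟨M, hM⟩ := hk.exists_rowLen_eq_zero
  exact ⟨k (M + 1), fun v hv => not_le.1 fun hle =>
    hv (hk.memMaya_of_rowLen_eq_zero (hM M le_rfl) hle)⟩

lemma rowLen_pos (hk : IsMaya c k) {x : ℕ} {v : ℤ} (hv : ¬ memMaya k v) (hvx : v < k (x + 1)) :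
    0 < rowLen c k x :=
  (hk.rowLen_nonneg x).lt_of_ne fun h => hv (hk.memMaya_of_rowLen_eq_zero h.symm hvx.le)

lemma le_of_memMaya (hk : IsMaya c k) {u : ℤ} (hu : memMaya k u) : u ≤ k 1 := by
  obtain ⟨x, rfl⟩ := memMaya_iff.1 hu
  exact hk.strictAnti.antitone (Nat.zero_le x)

lemma not_memMaya_of_lt_of_lt (hk : IsMaya c k) {x : ℕ} {v : ℤ} (h₁ : k (x + 2) < v)
    (h₂ : v < k (x + 1)) : ¬ memMaya k v := by
  intro hv
  obtain ⟨y, rfl⟩ := memMaya_iff.1 hv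
  have := (hk.strictAnti.lt_iff_gt (a := x + 1) (b := y)).1 h₁
  have := (hk.strictAnti.lt_iff_gt (a := y) (b := x)).1 h₂
  omega

lemma eq_of_lt_of_lt (hk : IsMaya c k) {x y : ℕ} {v : ℤ} (hx₁ : k (x + 2) < v)
    (hx₂ : v < k (x + 1)) (hy₁ : k (y + 2) < v) (hy₂ : v < k (y + 1)) : x = y := by
  have := (hk.strictAnti.lt_iff_gt (a := x + 1) (b := y)).1 (hx₁.trans hy₂)
  have := (hk.strictAnti.lt_iff_gt (a := y + 1) (b := x)).1 (hy₁.trans hx₂)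
  omega

lemma exists_lt_of_lt_of_not_memMaya (hk : IsMaya c k) {v : ℤ} (hv : ¬ memMaya k v)
    (hv₁ : v < k 1) : ∃ x, k (x + 2) < v ∧ v < k (x + 1) := by
  have hex : ∃ n, k (n + 1) < v := by
    obtain ⟨M, hM⟩ := hk.2
    refine ⟨M + (c - v).toNat, ?_⟩
    rw [hM _ (by omega)]
    push_cast
    omega
  obtain ⟨x, hx⟩ : ∃ x, Nat.find hex = x + 1 :=
    Nat.exists_eq_add_one.2 ((Nat.find_pos hex).2 (not_lt.2 hv₁.le))
  have hlt : k (x + 2) < v := by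
    have := Nat.find_spec hex
    rwa [hx] at this
  have hge : ¬ k (x + 1) < v := Nat.find_min hex (by omega)
  exact ⟨x, hlt, lt_of_le_of_ne (not_lt.1 hge) fun h => hv (memMaya_iff.2 ⟨x, h.symm⟩)⟩

lemma sIsHook_mayaSet_iff {xh yh xt yt : ℕ} :
    SIsHook (mayaSet c k) ((xh, yh), (xt, yt)) ↔
      0 < yh ∧ (yh : ℤ) = rowLen c k xh ∧ (yt : ℤ) < rowLen c k xt ∧
        rowLen c k (xt + 1) ≤ yt ∧ 0 < hookLen ((xh, yh), (xt, yt)) := by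
  simp only [SIsHook, mem_mayaSet, not_lt]
  constructor
  · rintro ⟨h₁, h₂, h₃, h₄, h₅⟩
    have : 0 < yh := Nat.pos_of_ne_zero fun h => by simp only [h] at h₁ h₂; omega
    exact ⟨this, by push_cast [Nat.cast_sub this] at h₁; omega, h₃, h₄, h₅⟩
  · rintro ⟨h₀, h₁, h₃, h₄, h₅⟩
    exact ⟨by push_cast [Nat.cast_sub h₀]; omega, h₁.symm.le, h₃, h₄, h₅⟩

lemma hookLen_eq_of_sIsHook {η : (ℕ × ℕ) × (ℕ × ℕ)} (hη : SIsHook (mayaSet c k) η) :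
    hookLen η = (pairOfHook c k η).1 - (pairOfHook c k η).2 := by
  obtain ⟨⟨xh, yh⟩, ⟨xt, yt⟩⟩ := η
  obtain ⟨-, hyh, -⟩ := sIsHook_mayaSet_iff.1 hη
  simp only [hookLen, pairOfHook, rowLen] at hyh ⊢
  omega

lemma mapsTo_pairOfHook (hk : IsMaya c k) :
    MapsTo (pairOfHook c k) {η | SIsHook (mayaSet c k) η} (beadGapPairs k) := by
  rintro ⟨⟨xh, yh⟩, ⟨xt, yt⟩⟩ hη
  have hlen := hookLen_eq_of_sIsHook hη
  obtain ⟨-, -, hyt, hyt', hpos⟩ := sIsHook_mayaSet_iff.1 hη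
  rw [rowLen_add_one] at hyt'
  simp only [pairOfHook, rowLen] at hlen hyt ⊢
  exact ⟨memMaya_iff.2 ⟨xh, rfl⟩, hk.not_memMaya_of_lt_of_lt (x := xt) (by omega) (by omega),
    by omega⟩

lemma injOn_pairOfHook (hk : IsMaya c k) :
    InjOn (pairOfHook c k) {η | SIsHook (mayaSet c k) η} := by
  rintro ⟨⟨xh, yh⟩, ⟨xt, yt⟩⟩ hη ⟨⟨xh', yh'⟩, ⟨xt', yt'⟩⟩ hη' heq
  obtain ⟨-, hyh, hyt, hyt', -⟩ := sIsHook_mayaSet_iff.1 hη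
  obtain ⟨-, hyh', hyt₂, hyt₂', -⟩ := sIsHook_mayaSet_iff.1 hη'
  simp only [pairOfHook, Prod.mk.injEq] at heq
  obtain ⟨hu, hv⟩ := heq
  have hxh : xh = xh' := by simpa using hk.strictAnti.injective hu
  rw [rowLen_add_one] at hyt' hyt₂'
  simp only [rowLen] at hyh hyh' hyt hyt₂
  have hxt : xt = xt' := hk.eq_of_lt_of_lt (v := yt - xt + c - 1) (by omega) (by omega)
    (by omega) (by omega)
  subst hxh hxt
  simp only [Prod.mk.injEq, true_and]
  omega

lemma surjOn_pairOfHook (hk : IsMaya c k) :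
    SurjOn (pairOfHook c k) {η | SIsHook (mayaSet c k) η} (beadGapPairs k) := by
  rintro ⟨u, v⟩ ⟨hu, hv, hvu⟩
  obtain ⟨xh, rfl⟩ := memMaya_iff.1 hu
  obtain ⟨xt, hxt₁, hxt₂⟩ :=
    hk.exists_lt_of_lt_of_not_memMaya hv (hvu.trans_le (hk.le_of_memMaya hu))
  have hrow := hk.rowLen_pos hv hvu
  have hfloor := hk.rowLen_nonneg (xt + 1)
  rw [rowLen_add_one] at hfloor
  simp only [rowLen] at hrow
  refine ⟨((xh, (rowLen c k xh).toNat), (xt, (v + xt + 1 - c).toNat)), ?_, ?_⟩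
  · rw [mem_ofPred_eq, sIsHook_mayaSet_iff, rowLen_add_one]
    simp only [hookLen, rowLen]
    omega
  · simp only [pairOfHook, Prod.mk.injEq, true_and]
    omega

lemma beadGapPairs_finite (hk : IsMaya c k) : (beadGapPairs k).Finite := by
  obtain ⟨N, hN⟩ := hk.exists_lt_of_not_memMaya
  refine ((finite_Icc N (k 1)).prod (finite_Icc N (k 1))).subset ?_
  rintro ⟨u, v⟩ ⟨hu, hv, hvu⟩
  have := hN v hv
  have := hk.le_of_memMaya hu
  exact ⟨⟨by omega, by omega⟩, ⟨by omega, by omega⟩⟩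

end IsMaya

open IsMaya

theorem stmt6 (c : ℤ) (k : ℕ → ℤ) (hk : IsMaya c k) :
    ({uv : ℤ × ℤ | memMaya k uv.1 ∧ ¬ memMaya k uv.2 ∧ uv.2 < uv.1}).Finite ∧
    ∃ f : ℤ × ℤ → (ℕ × ℕ) × (ℕ × ℕ),
      Set.BijOn f {uv : ℤ × ℤ | memMaya k uv.1 ∧ ¬ memMaya k uv.2 ∧ uv.2 < uv.1}
        {hk' | SIsHook (mayaSet c k) hk'} ∧
      ∀ uv ∈ {uv : ℤ × ℤ | memMaya k uv.1 ∧ ¬ memMaya k uv.2 ∧ uv.2 < uv.1},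
        hookLen (f uv) = uv.1 - uv.2 := by
  have hbij : Set.BijOn (pairOfHook c k) {η | SIsHook (mayaSet c k) η} (beadGapPairs k) :=
    ⟨hk.mapsTo_pairOfHook, hk.injOn_pairOfHook, hk.surjOn_pairOfHook⟩
  have hinv := hbij.invOn_invFunOn
  have hbijInv := hbij.symm hinv.symm
  refine ⟨hk.beadGapPairs_finite, _, hbijInv, fun uv huv => ?_⟩
  rw [hookLen_eq_of_sIsHook (hbijInv.mapsTo huv), hinv.2 huv]

end
end

section
/- Let k, k' ∈ ℤ with k ≡ k' (mod l). Then in the q-wedge space ∧² V(z): u_k ∧ u_{k'} = − u_{k'} ∧ u_k. In particular u_k ∧ u_k = 0. -/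
set_option maxHeartbeats 1000000

set_option synthInstance.maxHeartbeats 400000

noncomputable section

open MvPolynomial

attribute [local instance] Classical.propDecidable

/-- The coefficient field `K = ℚ(σ,τ)`. -/
abbrev KK := FractionRing (MvPolynomial (Fin 2) ℚ)

/-- `σ = s^{1/2}`. -/
def σK : KK := algebraMap (MvPolynomial (Fin 2) ℚ) KK (X 0)

/-- `τ = t^{1/2}`. -/
def τK : KK := algebraMap (MvPolynomial (Fin 2) ℚ) KK (X 1)

/-- `q = στ`. -/
def qK : KK := σK * τK

/-- The field `K(z_1, …, z_N)` of rational functions in `N` further variables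
(variables are indexed `0, …, N-1` here). -/
abbrev FF (N : ℕ) := FractionRing (MvPolynomial (Fin N) KK)

/-- Scalars of `K` inside `K(z_1,…,z_N)`. -/
def kc {N : ℕ} (c : KK) : FF N := algebraMap KK (FF N) c

/-- The variable `z_a` (0-based index). -/
def zvarF (N : ℕ) (a : ℕ) : FF N :=
  if h : a < N then algebraMap (MvPolynomial (Fin N) KK) (FF N) (X ⟨a, h⟩) else 0

/-- Lift an algebra equivalence of the polynomial ring to the fraction field. -/
def liftEquiv {N : ℕ} (φ : MvPolynomial (Fin N) KK ≃ₐ[KK] MvPolynomial (Fin N) KK) :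
    FF N ≃ₐ[KK] FF N :=
  IsFractionRing.algEquivOfAlgEquiv φ

def swPerm (N a b : ℕ) : Equiv.Perm (Fin N) :=
  if h : a < N ∧ b < N then Equiv.swap ⟨a, h.1⟩ ⟨b, h.2⟩ else 1

/-- `σ_{ab}` : the `K`-algebra automorphism of `K(z_1,…,z_N)` exchanging `z_a` and `z_b`. -/
def swF (N a b : ℕ) : FF N → FF N :=
  liftEquiv (renameEquiv KK (swPerm N a b))

/-- `g_{ab} f = ((q⁻¹ z_a - q z_b)/(z_a - z_b)) (σ_{ab} f - f) + q f`. -/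
def gF (N a b : ℕ) : FF N → FF N := fun f =>
  ((kc qK⁻¹ * zvarF N a - kc qK * zvarF N b) / (zvarF N a - zvarF N b)) * (swF N a b f - f)
    + kc qK * f

/-- `T_a = (q²-1)·id - q·g_{a,a+1}` (0-based: couples `z_a` and `z_{a+1}`). -/
def TF (N a : ℕ) : FF N → FF N := fun f => kc (qK ^ 2 - 1) * f - kc qK * gF N a (a + 1) f

/-- The Laurent polynomial subring `K[z_1^{±1},…,z_N^{±1}]` of `K(z_1,…,z_N)`. -/
def Laurent (N : ℕ) : Subalgebra KK (FF N) :=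
  Algebra.adjoin KK
    (Set.range (fun a : Fin N => zvarF N a) ∪ Set.range (fun a : Fin N => (zvarF N a)⁻¹))

/-- The monomial `z^m = z_1^{m_1} ⋯ z_N^{m_N}`. -/
def zmon {N : ℕ} (m : Fin N → ℤ) : FF N := ∏ a : Fin N, zvarF N a ^ m a

lemma zvar_mem {N : ℕ} (a : Fin N) : zvarF N (a : ℕ) ∈ Laurent N :=
  Algebra.subset_adjoin (Or.inl ⟨a, rfl⟩)

lemma zvar_inv_mem {N : ℕ} (a : Fin N) : (zvarF N (a : ℕ))⁻¹ ∈ Laurent N :=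
  Algebra.subset_adjoin (Or.inr ⟨a, rfl⟩)

lemma zvar_zpow_mem {N : ℕ} (a : Fin N) (n : ℤ) : zvarF N (a : ℕ) ^ n ∈ Laurent N := by
  rcases le_or_gt 0 n with h | h
  · lift n to ℕ using h
    rw [zpow_natCast]
    exact pow_mem (zvar_mem a) n
  · obtain ⟨k, rfl⟩ : ∃ k : ℕ, n = -(k : ℤ) := ⟨n.natAbs, by omega⟩
    rw [zpow_neg, zpow_natCast, ← inv_pow]
    exact pow_mem (zvar_inv_mem a) k

lemma zmon_mem {N : ℕ} (m : Fin N → ℤ) : zmon m ∈ Laurent N :=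
  Submonoid.prod_mem _ (fun a _ => zvar_zpow_mem a (m a))

/-- `V^{⊗N}`, realized as the free `K`-module on the set of multi-indices `(j_1,…,j_N)`. -/
abbrev WT (l N : ℕ) := (Fin N → Fin l) → KK

/-- The basis vector `v_{j_1} ⊗ ⋯ ⊗ v_{j_N}`. -/
def eW {l N : ℕ} (j : Fin N → Fin l) : WT l N := Pi.single j 1

def vTvec (l N a : ℕ) (j : Fin N → Fin l) : WT l N :=
  if h : a + 1 < N then
    let ia : Fin N := ⟨a, Nat.lt_of_succ_lt h⟩
    let ib : Fin N := ⟨a + 1, h⟩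
    let j' : Fin N → Fin l := j ∘ Equiv.swap ia ib
    if j ia = j ib then qK ^ 2 • eW j
    else if j ia < j ib then qK • eW j'
    else qK • eW j' + (qK ^ 2 - 1) • eW j
  else 0

/-- `vT_a = 1^{⊗a-1} ⊗ vT ⊗ 1^{⊗N-a-1}` (0-based: acts on slots `a`, `a+1`). -/
def vTop (l N a : ℕ) : WT l N →ₗ[KK] WT l N :=
  Module.Basis.constr (Pi.basisFun KK (Fin N → Fin l)) KK (vTvec l N a)

open scoped TensorProduct

/-- `K[z_1^{±1},…,z_N^{±1}] ⊗_K V^{⊗N}`. -/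
abbrev LW (l N : ℕ) := (Laurent N) ⊗[KK] (WT l N)

/-- The sum of the images of the operators `T_a ⊗ id - id ⊗ vT_a`. -/
def wedgeRel (l N : ℕ) : Submodule KK (LW l N) :=
  Submodule.span KK
    { v | ∃ a : ℕ, a + 1 < N ∧ ∃ (x : Laurent N) (w : WT l N)
        (hx : TF N a (x : FF N) ∈ Laurent N),
        v = (⟨TF N a (x : FF N), hx⟩ : Laurent N) ⊗ₜ[KK] w - x ⊗ₜ[KK] (vTop l N a w) }

/-- The q-wedge space `∧^N V(z)`. -/
abbrev QW (l N : ℕ) :=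
  @HasQuotient.Quotient (LW l N) (Submodule KK (LW l N))
    (@Submodule.hasQuotient KK (LW l N) _ _ _) (wedgeRel l N)

/-- `[Φ ⊗ v_{j_1} ⊗ ⋯ ⊗ v_{j_N}]` for a Laurent polynomial `Φ`. -/
def wedgeOf {l N : ℕ} (Φ : FF N) (hΦ : Φ ∈ Laurent N) (j : Fin N → Fin l) : QW l N :=
  Submodule.Quotient.mk ((⟨Φ, hΦ⟩ : Laurent N) ⊗ₜ[KK] eW j)

def jOf (l : ℕ) (k : ℤ) : ℕ := (k % (l : ℤ)).toNat

def mOf (l : ℕ) (k : ℤ) : ℤ := (k % (l : ℤ) - k) / (l : ℤ) - 1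

def jFin (l : ℕ) (hl : 0 < l) (k : ℤ) : Fin l :=
  ⟨jOf l k, by
    have hl' : (0 : ℤ) < (l : ℤ) := by exact_mod_cast hl
    have h1 : 0 ≤ k % (l : ℤ) := Int.emod_nonneg k hl'.ne'
    have h2 : k % (l : ℤ) < l := Int.emod_lt_of_pos k hl'
    simp only [jOf]
    omega⟩

/-- The wedge `u_{k_1} ∧ ⋯ ∧ u_{k_N}`. -/
def uwedge (l N : ℕ) (hl : 0 < l) (k : Fin N → ℤ) : QW l N :=
  Submodule.Quotient.mk ((⟨zmon (fun a => mOf l (k a)), zmon_mem _⟩ : Laurent N)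
    ⊗ₜ[KK] eW (fun a => jFin l hl (k a)))

/-! On a Laurent polynomial `P` symmetric in `z_a, z_{a+1}` one has `g_{a,a+1} P = q P`, so
`T_a P = -P`, while `vT_a` acts on `v_j` by `q²` when `j_a = j_{a+1}`. The defining relation
applied to `P ⊗ v_j` therefore reads `-(1 + q²) • [P ⊗ v_j] = 0`, and `[P ⊗ v_j] = 0`.
For `k ≡ k' (mod l)` the wedges `u_k ∧ u_{k'}` and `u_{k'} ∧ u_k` carry the same vector
`v_j ⊗ v_j` and monomials exchanged by `σ_{12}`, so their sum is such a class. -/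

lemma one_add_qK_sq_ne_zero : (1 + qK ^ 2 : KK) ≠ 0 := by
  have h : (1 + qK ^ 2 : KK) = algebraMap (MvPolynomial (Fin 2) ℚ) KK (1 + (X 0 * X 1) ^ 2) := by
    simp [qK, σK, τK]
  rw [h, Ne, IsFractionRing.to_map_eq_zero_iff]
  intro h0
  simpa using congrArg (MvPolynomial.eval 0) h0

lemma swF_eq (N a b : ℕ) : swF N a b = liftEquiv (renameEquiv KK (swPerm N a b)) := rfl

lemma swF_zvarF {N : ℕ} (a b c : ℕ) (hc : c < N) :
    swF N a b (zvarF N c) = zvarF N (swPerm N a b ⟨c, hc⟩) := by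
  simp only [swF_eq, liftEquiv, zvarF, dif_pos hc, Fin.is_lt, dif_pos,
    IsFractionRing.algEquivOfAlgEquiv_algebraMap, renameEquiv_apply, rename_X]

lemma swF_zvarF_left {N a b : ℕ} (ha : a < N) (hb : b < N) :
    swF N a b (zvarF N a) = zvarF N b := by
  rw [swF_zvarF a b a ha, swPerm, dif_pos ⟨ha, hb⟩, Equiv.swap_apply_left]

lemma swF_zvarF_right {N a b : ℕ} (ha : a < N) (hb : b < N) :
    swF N a b (zvarF N b) = zvarF N a := by
  rw [swF_zvarF a b b hb, swPerm, dif_pos ⟨ha, hb⟩, Equiv.swap_apply_right]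

lemma swF_zmon_pair (x y : ℤ) : swF 2 0 1 (zmon ![x, y]) = zmon ![y, x] := by
  simp only [zmon, Fin.prod_univ_two, Fin.val_zero, Fin.val_one, swF_eq, map_mul, map_zpow₀]
  rw [← swF_eq, swF_zvarF_left two_pos one_lt_two, swF_zvarF_right two_pos one_lt_two]
  simp [mul_comm]

lemma TF_of_swF_eq {N a : ℕ} {f : FF N} (hf : swF N a (a + 1) f = f) : TF N a f = -f := by
  have hq : (kc (qK ^ 2 - 1) : FF N) = kc qK * kc qK - 1 := by
    simp [kc, sq]
  simp only [TF, gF, hf, hq]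
  ring

lemma vTop_eW_of_eq {l N a : ℕ} (h : a + 1 < N) {j : Fin N → Fin l}
    (hj : j ⟨a, by omega⟩ = j ⟨a + 1, h⟩) : vTop l N a (eW j) = qK ^ 2 • eW j := by
  have he : eW j = Pi.basisFun KK (Fin N → Fin l) j := by simp [eW]
  rw [vTop, he, Module.Basis.constr_basis, ← he]
  simp only [vTvec, dif_pos h, if_pos hj]

lemma mk_tmul_eW_eq_zero_of_swF_eq {l N a : ℕ} (h : a + 1 < N) {j : Fin N → Fin l}
    (hj : j ⟨a, by omega⟩ = j ⟨a + 1, h⟩) (P : Laurent N) (hP : swF N a (a + 1) P = P) :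
    (Submodule.Quotient.mk (P ⊗ₜ[KK] eW j) : QW l N) = 0 := by
  have hT : TF N a P = -P := TF_of_swF_eq hP
  have hTP : TF N a P ∈ Laurent N := hT ▸ neg_mem P.2
  have hrel : (⟨TF N a P, hTP⟩ : Laurent N) ⊗ₜ[KK] eW j - P ⊗ₜ[KK] vTop l N a (eW j)
      ∈ wedgeRel l N :=
    Submodule.subset_span ⟨a, h, P, eW j, hTP, rfl⟩
  have hscalar : -P - qK ^ 2 • P = -(1 + qK ^ 2) • P := by
    rw [neg_smul, add_smul, one_smul, neg_add, sub_eq_add_neg]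
  rw [show (⟨TF N a P, hTP⟩ : Laurent N) = -P from Subtype.ext hT, vTop_eW_of_eq h hj,
    ← TensorProduct.smul_tmul, ← TensorProduct.sub_tmul, hscalar,
    ← TensorProduct.smul_tmul'] at hrel
  have hne : -(1 + qK ^ 2) ≠ 0 := neg_ne_zero.mpr one_add_qK_sq_ne_zero
  exact (Submodule.Quotient.mk_eq_zero _).mpr ((Submodule.smul_mem_iff _ hne).mp hrel)

lemma jFin_eq_of_dvd_sub {l : ℕ} (hl : 0 < l) {a b : ℤ} (h : (l : ℤ) ∣ a - b) :
    jFin l hl a = jFin l hl b :=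
  Fin.ext (congrArg Int.toNat (Int.modEq_iff_dvd.mpr h).symm)

lemma uwedge_pair {l : ℕ} (hl : 0 < l) (a b : ℤ) :
    uwedge l 2 hl ![a, b] = Submodule.Quotient.mk
      ((⟨zmon ![mOf l a, mOf l b], zmon_mem _⟩ : Laurent 2) ⊗ₜ[KK] eW ![jFin l hl a, jFin l hl b]) := by
  unfold uwedge
  congr <;> funext i <;> fin_cases i <;> rfl

lemma swF_zmon_add_zmon_swap (x y : ℤ) :
    swF 2 0 1 (zmon ![x, y] + zmon ![y, x]) = zmon ![x, y] + zmon ![y, x] := by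
  rw [swF_eq, map_add, ← swF_eq, swF_zmon_pair, swF_zmon_pair, add_comm]

lemma uwedge_add_uwedge_swap {l : ℕ} (hl : 0 < l) {a b : ℤ} (h : (l : ℤ) ∣ a - b) :
    uwedge l 2 hl ![a, b] + uwedge l 2 hl ![b, a] = 0 := by
  rw [uwedge_pair, uwedge_pair, jFin_eq_of_dvd_sub hl h, ← Submodule.Quotient.mk_add,
    ← TensorProduct.add_tmul]
  exact mk_tmul_eW_eq_zero_of_swF_eq one_lt_two rfl _ (swF_zmon_add_zmon_swap _ _)

lemma uwedge_self {l : ℕ} (hl : 0 < l) (a : ℤ) : uwedge l 2 hl ![a, a] = 0 := by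
  rw [uwedge_pair]
  exact mk_tmul_eW_eq_zero_of_swF_eq one_lt_two rfl _ (swF_zmon_pair _ _)

theorem stmt15 (l : ℕ) (hl : 0 < l) (k k' : ℤ) (hcong : (l : ℤ) ∣ (k - k')) :
    uwedge l 2 hl ![k, k'] = - uwedge l 2 hl ![k', k] ∧
    uwedge l 2 hl ![k, k] = 0 :=
  ⟨eq_neg_of_add_eq_zero_left (uwedge_add_uwedge_swap hl hcong), uwedge_self hl k⟩

end
end
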